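/- Fix β ≥ 0 and R > 0, and define w : (−R,R)³ → ℝ by w(x) = ∑_{i=1}^{3} ( 2β + 12 (x_i + R)^{−2} ) + ( 2β + 12 (R − x_i)^{−2} ). Then w is smooth on (−R,R)³, w(x) → ∞ as x approaches the boundary of (−R,R)³, and Δw(x) ≤ w(x)²/2 − β w(x) for every x ∈ (−R,R)³, where Δw = ∑_{i=1}^3 ∂²w/∂x_i² is the Laplacian. -/

import Mathlib

open Filter

/-- The Laplacian of `f : ℝ³ → ℝ` at `x`: the sum of the pure second partial
derivatives in the coordinate directions. -/
noncomputable def laplacian (f : EuclideanSpace ℝ (Fin 3) → ℝ)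
    (x : EuclideanSpace ℝ (Fin 3)) : ℝ :=
  ∑ i : Fin 3, deriv (deriv (fun s : ℝ => f (x + s • EuclideanSpace.single i (1:ℝ)))) 0

/-- The open cube `(-R,R)³`. -/
def cubeR (R : ℝ) : Set (EuclideanSpace ℝ (Fin 3)) :=
  {x | ∀ i : Fin 3, x i ∈ Set.Ioo (-R) R}

/-- `w(x) = ∑_{i=1}^3 (2β + 12 (x_i+R)^{-2}) + (2β + 12 (R-x_i)^{-2})`. -/
noncomputable def wBetaR (β R : ℝ) (x : EuclideanSpace ℝ (Fin 3)) : ℝ :=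
  ∑ i : Fin 3, ((2 * β + 12 * ((x i + R)^2)⁻¹) + (2 * β + 12 * ((R - x i)^2)⁻¹))

lemma derivA (c s : ℝ) (h : s + c ≠ 0) :
    HasDerivAt (fun s => ((s + c)^2)⁻¹) (-2 * ((s+c)^3)⁻¹) s := by
  have h1 : HasDerivAt (fun s : ℝ => (s + c)^2) (2*(s+c)) s := by
    have h0 := ((hasDerivAt_id' s).add_const c).pow 2; norm_num at h0; exact h0
  have := h1.inv (pow_ne_zero 2 h)
  refine this.congr_deriv ?_
  field_simp

lemma derivB (c s : ℝ) (h : s + c ≠ 0) :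
    HasDerivAt (fun s => -2 * ((s+c)^3)⁻¹) (6 * (((s+c)^2)⁻¹)^2) s := by
  have h1 : HasDerivAt (fun s : ℝ => (s + c)^3) (3*(s+c)^2) s := by
    have h0 := ((hasDerivAt_id' s).add_const c).pow 3; norm_num at h0; exact h0
  have := (h1.inv (pow_ne_zero 3 h)).const_mul (-2 : ℝ)
  refine this.congr_deriv ?_
  field_simp; ring

lemma second_deriv_calc (C c1 c2 : ℝ) (h1 : c1 ≠ 0) (h2 : c2 ≠ 0) :
    deriv (deriv (fun s : ℝ => C + 12*((s+c1)^2)⁻¹ + 12*((s+c2)^2)⁻¹)) 0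
      = 72*((c1^2)⁻¹)^2 + 72*((c2^2)⁻¹)^2 := by
  set G : ℝ → ℝ := fun s => 12*(-2*((s+c1)^3)⁻¹) + 12*(-2*((s+c2)^3)⁻¹) with hG
  have e1 : ∀ᶠ s in nhds (0:ℝ), s + c1 ≠ 0 :=
    ((continuous_id.add continuous_const).continuousAt).eventually_ne (by simpa using h1)
  have e2 : ∀ᶠ s in nhds (0:ℝ), s + c2 ≠ 0 :=
    ((continuous_id.add continuous_const).continuousAt).eventually_ne (by simpa using h2)
  have hg' : deriv (fun s : ℝ => C + 12*((s+c1)^2)⁻¹ + 12*((s+c2)^2)⁻¹) =ᶠ[nhds 0] G := by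
    filter_upwards [e1, e2] with s hs1 hs2
    have h : HasDerivAt (fun s : ℝ => C + 12*((s+c1)^2)⁻¹ + 12*((s+c2)^2)⁻¹)
        (12*(-2*((s+c1)^3)⁻¹) + 12*(-2*((s+c2)^3)⁻¹)) s := by
      have := (((derivA c1 s hs1).const_mul 12).const_add C).add ((derivA c2 s hs2).const_mul 12)
      exact this
    exact h.deriv
  rw [hg'.deriv_eq]
  have h01 : (0:ℝ) + c1 ≠ 0 := by simpa using h1
  have h02 : (0:ℝ) + c2 ≠ 0 := by simpa using h2
  have h : HasDerivAt G (12*(6 * (((0+c1)^2)⁻¹)^2) + 12*(6 * (((0+c2)^2)⁻¹)^2)) 0 :=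
    ((derivB c1 0 h01).const_mul 12).add ((derivB c2 0 h02).const_mul 12)
  rw [h.deriv]
  simp; ring

lemma wslice (β R : ℝ) (x : EuclideanSpace ℝ (Fin 3)) (i : Fin 3) :
    ∀ s : ℝ, wBetaR β R (x + s • EuclideanSpace.single i (1:ℝ)) =
      (wBetaR β R x - 12*((x i + R)^2)⁻¹ - 12*((R - x i)^2)⁻¹)
      + 12*((s + (x i + R))^2)⁻¹ + 12*((s + (x i - R))^2)⁻¹ := by
  intro s
  have key : ∀ j, (x + s • EuclideanSpace.single i (1:ℝ)) j
      = x j + s * (if j = i then 1 else 0) := by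
    intro j; simp [EuclideanSpace.single_apply]
  unfold wBetaR
  simp only [Fin.sum_univ_three, key]
  fin_cases i <;> · simp; ring_nf

lemma lap_eq (β R : ℝ) (x : EuclideanSpace ℝ (Fin 3)) (hx : x ∈ cubeR R) :
    laplacian (wBetaR β R) x
      = ∑ i : Fin 3, (72*((((x i + R))^2)⁻¹)^2 + 72*(((R - x i)^2)⁻¹)^2) := by
  unfold laplacian
  refine Finset.sum_congr rfl fun i _ => ?_
  have hxi := hx i
  have h1 : x i + R ≠ 0 := by have := hxi.1; linarith
  have h2 : x i - R ≠ 0 := by have := hxi.2; intro h; linarith [sub_eq_zero.mp h]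
  have hfun : (fun s : ℝ => wBetaR β R (x + s • EuclideanSpace.single i (1:ℝ)))
      = fun s : ℝ => (wBetaR β R x - 12*((x i + R)^2)⁻¹ - 12*((R - x i)^2)⁻¹)
        + 12*((s + (x i + R))^2)⁻¹ + 12*((s + (x i - R))^2)⁻¹ := funext (wslice β R x i)
  rw [hfun, second_deriv_calc _ _ _ h1 h2]
  have : (x i - R)^2 = (R - x i)^2 := by ring
  rw [this]

theorem cubeR_supersolution (β R : ℝ) (hβ : 0 ≤ β) (hR : 0 < R) :
    ContDiffOn ℝ (⊤ : ℕ∞) (wBetaR β R) (cubeR R) ∧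
    (∀ y ∈ frontier (cubeR R), Tendsto (wBetaR β R) (nhdsWithin y (cubeR R)) atTop) ∧
    (∀ x ∈ cubeR R, laplacian (wBetaR β R) x ≤ (wBetaR β R x)^2 / 2 - β * wBetaR β R x) := by
  refine ⟨?_, ?_, ?_⟩
  · -- smoothness
    unfold wBetaR
    refine ContDiffOn.sum fun i _ => ?_
    have hproj : ContDiff ℝ (⊤ : ℕ∞) (fun x : EuclideanSpace ℝ (Fin 3) => x i) :=
      (EuclideanSpace.proj i : EuclideanSpace ℝ (Fin 3) →L[ℝ] ℝ).contDiff
    have h1 : ContDiffOn ℝ (⊤ : ℕ∞) (fun x : EuclideanSpace ℝ (Fin 3) => ((x i + R)^2)⁻¹) (cubeR R) := by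
      refine ContDiffOn.inv (((hproj.add contDiff_const).pow 2).contDiffOn) fun x hx => ?_
      exact pow_ne_zero 2 (ne_of_gt (by have := (hx i).1; linarith))
    have h2 : ContDiffOn ℝ (⊤ : ℕ∞) (fun x : EuclideanSpace ℝ (Fin 3) => ((R - x i)^2)⁻¹) (cubeR R) := by
      refine ContDiffOn.inv (((contDiff_const.sub hproj).pow 2).contDiffOn) fun x hx => ?_
      exact pow_ne_zero 2 (ne_of_gt (by have := (hx i).2; linarith))
    exact (contDiffOn_const.add (contDiffOn_const.mul h1)).add
      (contDiffOn_const.add (contDiffOn_const.mul h2))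
  · -- boundary blow-up
    intro y hy
    have hopen : IsOpen (cubeR R) := by
      have he : cubeR R = ⋂ i, (fun x : EuclideanSpace ℝ (Fin 3) => x i) ⁻¹' Set.Ioo (-R) R := by
        ext x; simp [cubeR, Set.mem_iInter]
      rw [he]
      exact isOpen_iInter_of_finite fun i =>
        isOpen_Ioo.preimage (EuclideanSpace.proj i : EuclideanSpace ℝ (Fin 3) →L[ℝ] ℝ).continuous
    have hIcc : ∀ i : Fin 3, y i ∈ Set.Icc (-R) R := by
      have hsub : closure (cubeR R) ⊆ {x : EuclideanSpace ℝ (Fin 3) | ∀ i, x i ∈ Set.Icc (-R) R} := by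
        refine closure_minimal (fun x hx i => Set.Ioo_subset_Icc_self (hx i)) ?_
        have he : {x : EuclideanSpace ℝ (Fin 3) | ∀ i, x i ∈ Set.Icc (-R) R}
            = ⋂ i, (fun x : EuclideanSpace ℝ (Fin 3) => x i) ⁻¹' Set.Icc (-R) R := by
          ext x; simp [Set.mem_iInter]
        rw [he]
        exact isClosed_iInter fun i =>
          isClosed_Icc.preimage (EuclideanSpace.proj i : EuclideanSpace ℝ (Fin 3) →L[ℝ] ℝ).continuous
      exact hsub (frontier_subset_closure hy)
    have hne : y ∉ cubeR R := fun h => hy.2 (by rwa [hopen.interior_eq])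
    obtain ⟨i, hi⟩ : ∃ i : Fin 3, y i = -R ∨ y i = R := by
      by_contra h
      push_neg at h
      exact hne fun i => ⟨lt_of_le_of_ne (hIcc i).1 (Ne.symm (h i).1), lt_of_le_of_ne (hIcc i).2 (h i).2⟩
    have hmem := eventually_mem_nhdsWithin (s := cubeR R) (a := y)
    have key : ∀ (φ : EuclideanSpace ℝ (Fin 3) → ℝ),
        (∀ x ∈ cubeR R, 0 < φ x) → φ y = 0 →
        Continuous φ →
        (∀ x ∈ cubeR R, 12 * (φ x)⁻¹ ≤ wBetaR β R x) →
        Tendsto (wBetaR β R) (nhdsWithin y (cubeR R)) atTop := by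
      intro φ hpos hy0 hc hb
      have ht : Tendsto φ (nhdsWithin y (cubeR R)) (nhdsWithin 0 (Set.Ioi 0)) := by
        rw [tendsto_nhdsWithin_iff]
        refine ⟨?_, hmem.mono fun x hx => hpos x hx⟩
        have := (hc.tendsto y).mono_left (nhdsWithin_le_nhds (s := cubeR R))
        rwa [hy0] at this
      have h2 : Tendsto (fun x => (φ x)⁻¹) (nhdsWithin y (cubeR R)) atTop :=
        tendsto_inv_nhdsGT_zero.comp ht
      have h3 : Tendsto (fun x => 12 * (φ x)⁻¹) (nhdsWithin y (cubeR R)) atTop :=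
        h2.const_mul_atTop (by norm_num)
      exact tendsto_atTop_mono' _ (hmem.mono fun x hx => hb x hx) h3
    have wbound : ∀ x ∈ cubeR R,
        12 * (((x i + R)^2))⁻¹ ≤ wBetaR β R x ∧ 12 * (((R - x i)^2))⁻¹ ≤ wBetaR β R x := by
      intro x hx
      have hterm : ∀ j : Fin 3, (0:ℝ) ≤ (2 * β + 12 * ((x j + R)^2)⁻¹) + (2 * β + 12 * ((R - x j)^2)⁻¹) := by
        intro j
        have p1 : (0:ℝ) ≤ ((x j + R)^2)⁻¹ := by positivity
        have p2 : (0:ℝ) ≤ ((R - x j)^2)⁻¹ := by positivity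
        linarith
      have hle : (2 * β + 12 * ((x i + R)^2)⁻¹) + (2 * β + 12 * ((R - x i)^2)⁻¹) ≤ wBetaR β R x := by
        unfold wBetaR
        exact Finset.single_le_sum (fun j _ => hterm j) (Finset.mem_univ i)
      have p1 : (0:ℝ) ≤ ((x i + R)^2)⁻¹ := by positivity
      have p2 : (0:ℝ) ≤ ((R - x i)^2)⁻¹ := by positivity
      constructor <;> linarith
    rcases hi with hi | hi
    · have hp : ∀ x ∈ cubeR R, (0:ℝ) < (x i + R)^2 := by
        intro x hx
        have h' : 0 < x i + R := by have := (hx i).1; linarith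
        positivity
      refine key (fun x => (x i + R)^2) hp (by show (y i + R)^2 = 0; rw [hi]; ring) ?_
        (fun x hx => (wbound x hx).1)
      exact ((EuclideanSpace.proj i : EuclideanSpace ℝ (Fin 3) →L[ℝ] ℝ).continuous.add continuous_const).pow 2
    · have hp : ∀ x ∈ cubeR R, (0:ℝ) < (R - x i)^2 := by
        intro x hx
        have h' : 0 < R - x i := by have := (hx i).2; linarith
        positivity
      refine key (fun x => (R - x i)^2) hp (by show (R - y i)^2 = 0; rw [hi]; ring) ?_
        (fun x hx => (wbound x hx).2)
      exact (continuous_const.sub (EuclideanSpace.proj i : EuclideanSpace ℝ (Fin 3) →L[ℝ] ℝ).continuous).pow 2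
  · -- inequality
    intro x hx
    rw [lap_eq β R x hx]
    have h1 : ∀ i : Fin 3, (0:ℝ) < ((x i + R)^2)⁻¹ := by
      intro i; have := (hx i).1
      have : x i + R > 0 := by linarith
      positivity
    have h2 : ∀ i : Fin 3, (0:ℝ) < ((R - x i)^2)⁻¹ := by
      intro i; have := (hx i).2
      have : R - x i > 0 := by linarith
      positivity
    unfold wBetaR
    simp only [Fin.sum_univ_three]
    nlinarith [h1 0, h1 1, h1 2, h2 0, h2 1, h2 2, hβ, sq_nonneg β,
      mul_pos (h1 0) (h1 1), mul_pos (h1 0) (h1 2), mul_pos (h1 1) (h1 2),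
      mul_pos (h2 0) (h2 1), mul_pos (h2 0) (h2 2), mul_pos (h2 1) (h2 2),
      mul_pos (h1 0) (h2 0), mul_pos (h1 0) (h2 1), mul_pos (h1 0) (h2 2),
      mul_pos (h1 1) (h2 0), mul_pos (h1 1) (h2 1), mul_pos (h1 1) (h2 2),
      mul_pos (h1 2) (h2 0), mul_pos (h1 2) (h2 1), mul_pos (h1 2) (h2 2),
      mul_nonneg hβ (h1 0).le, mul_nonneg hβ (h2 0).le,
      mul_nonneg hβ (h1 1).le, mul_nonneg hβ (h2 1).le,
      mul_nonneg hβ (h1 2).le, mul_nonneg hβ (h2 2).le]
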